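/- For k ≥ 2 and real c > 0, Σ_{y k-free} η(y)^{−kc−1} = Π_p (1 + (k−1)/p^{kc+1}), and this quantity is O(c^{−(k−1)} + 1) as c varies over (0,1]. -/

import Mathlib

/-- The radical of a positive integer: the product of its distinct prime divisors. -/
def radical (n : ℕ) : ℕ := ∏ p ∈ n.primeFactors, p

open scoped Classical

/-- The sum `Σ_{y k-free} η(y)^{-kc-1}`. -/
noncomputable def F (k : ℕ) (c : ℝ) : ℝ :=
  ∑' y : ℕ,
    if 0 < y ∧ ∀ p : ℕ, p.Prime → ¬ p ^ k ∣ y then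
      ((radical y : ℕ) : ℝ) ^ (-(k * c) - 1) else 0

/-! The summand `y ↦ [y k-free] η(y)^(-s)` is multiplicative with local factor
`1 + (k - 1) p^(-s)` at `p`, so the Euler product holds as soon as the series converges.
Convergence and the bound both come from the partial Euler products:
`1 + (k - 1) x ≤ (1 + x)^(k - 1)`, and `∏_{p ∈ P} (1 + p^(-s))` is a sum of distinct terms
`n^(-s)`, hence at most `ζ(s) ≤ 1 + 1/(s - 1)`. For `s = kc + 1` this gives
`(1 + 1/(kc))^(k - 1) ≤ (2/c)^(k - 1)`. -/

open Finset

section MultiplicativeSums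

variable {f : ℕ → ℝ}

lemma sum_range_le_prod_primesBelow_tsum (hf₀ : f 0 = 0) (hf₁ : f 1 = 1)
    (hmul : ∀ {m n}, m.Coprime n → f (m * n) = f m * f n) (hnonneg : ∀ n, 0 ≤ f n)
    (hsum : ∀ {p : ℕ}, p.Prime → Summable fun e ↦ f (p ^ e)) (N : ℕ) :
    ∑ n ∈ range N, f n ≤ ∏ p ∈ N.primesBelow, ∑' e, f (p ^ e) := by
  have hsmooth :
      HasSum (N.smoothNumbers.indicator f) (∏ p ∈ N.primesBelow, ∑' e, f (p ^ e)) :=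
    hasSum_subtype_iff_indicator.mp
      (EulerProduct.summable_and_hasSum_smoothNumbers_prod_primesBelow_tsum
        hf₁ hmul (fun hp ↦ (hsum hp).abs) N).2
  calc ∑ n ∈ range N, f n = ∑ n ∈ range N, N.smoothNumbers.indicator f n := by
        refine sum_congr rfl fun n hn ↦ ?_
        rcases n.eq_zero_or_pos with rfl | hpos
        · rw [hf₀, Set.indicator_of_notMem fun h ↦ Nat.ne_zero_of_mem_smoothNumbers h rfl]
        · rw [Set.indicator_of_mem (Nat.mem_smoothNumbers_of_lt hpos (mem_range.mp hn))]
    _ ≤ _ := sum_le_hasSum _ (fun n _ ↦ Set.indicator_nonneg (fun n _ ↦ hnonneg n) n) hsmooth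

lemma summable_and_tsum_le_of_prod_primesBelow_le (hf₀ : f 0 = 0) (hf₁ : f 1 = 1)
    (hmul : ∀ {m n}, m.Coprime n → f (m * n) = f m * f n) (hnonneg : ∀ n, 0 ≤ f n)
    (hsum : ∀ {p : ℕ}, p.Prime → Summable fun e ↦ f (p ^ e)) {B : ℝ}
    (hB : ∀ N : ℕ, ∏ p ∈ N.primesBelow, ∑' e, f (p ^ e) ≤ B) :
    Summable f ∧ ∑' n, f n ≤ B := by
  have h N := (sum_range_le_prod_primesBelow_tsum hf₀ hf₁ hmul hnonneg hsum N).trans (hB N)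
  exact ⟨summable_of_sum_range_le hnonneg h, Real.tsum_le_of_sum_range_le hnonneg h⟩

end MultiplicativeSums

lemma prod_one_add_rpow_neg_le_tsum {s : ℝ} (hs : 1 < s) {P : Finset ℕ}
    (hP : ∀ p ∈ P, p.Prime) :
    ∏ p ∈ P, (1 + (p : ℝ) ^ (-s)) ≤ ∑' n : ℕ, (n : ℝ) ^ (-s) := by
  have hinj : Set.InjOn (fun t : Finset ℕ ↦ ∏ p ∈ t, p) P.powerset := by
    intro t₁ ht₁ t₂ ht₂ h
    rw [← Nat.primeFactors_prod fun p hp ↦ hP p (mem_powerset.mp ht₁ hp),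
      ← Nat.primeFactors_prod fun p hp ↦ hP p (mem_powerset.mp ht₂ hp)]
    exact congrArg Nat.primeFactors h
  calc ∏ p ∈ P, (1 + (p : ℝ) ^ (-s))
      = ∑ t ∈ P.powerset, ((∏ p ∈ t, p : ℕ) : ℝ) ^ (-s) := by
        rw [prod_one_add]
        refine sum_congr rfl fun t _ ↦ ?_
        rw [Nat.cast_prod, Real.finsetProd_rpow _ _ fun p _ ↦ Nat.cast_nonneg p]
    _ = ∑ n ∈ P.powerset.image (fun t ↦ ∏ p ∈ t, p), (n : ℝ) ^ (-s) := by
        rw [sum_image hinj]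
    _ ≤ ∑' n : ℕ, (n : ℝ) ^ (-s) :=
        (Real.summable_nat_rpow.mpr (by linarith)).sum_le_tsum _
          fun n _ ↦ Real.rpow_nonneg (Nat.cast_nonneg n) _

-- The `n = 0` term is `0 ^ (-s) = 0`, so the left side is `ζ(s)`.
lemma tsum_nat_rpow_neg_le {s : ℝ} (hs : 1 < s) :
    ∑' n : ℕ, (n : ℝ) ^ (-s) ≤ 1 + 1 / (s - 1) := by
  have hsum : Summable fun n : ℕ ↦ (n : ℝ) ^ (-s) := Real.summable_nat_rpow.mpr (by linarith)
  have hshift : ∑' n : ℕ, (n : ℝ) ^ (-s) = ∑' n : ℕ, 1 / (n + 1 : ℝ) ^ s := by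
    rw [hsum.tsum_eq_zero_add, Nat.cast_zero, Real.zero_rpow (by linarith), zero_add]
    refine tsum_congr fun n ↦ ?_
    rw [Real.rpow_neg (by positivity), one_div, Nat.cast_add_one]
  -- `zeta_limit_aux1`: `ζ(s) - 1/(s - 1) = 1 - s * termTSum s`, and `termTSum s ≥ 0`.
  have hterm : 0 ≤ s * ZetaAsymptotics.termTSum s :=
    mul_nonneg (by linarith) (tsum_nonneg fun n ↦ ZetaAsymptotics.term_nonneg (n + 1) s)
  linarith [ZetaAsymptotics.zeta_limit_aux1 hs]

lemma radical_mul_of_coprime {m n : ℕ} (hm : m ≠ 0) (hn : n ≠ 0) (h : m.Coprime n) :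
    radical (m * n) = radical m * radical n := by
  rw [radical, Nat.primeFactors_mul hm hn, prod_union h.disjoint_primeFactors]; rfl

lemma radical_prime_pow {p e : ℕ} (hp : p.Prime) (he : e ≠ 0) : radical (p ^ e) = p := by
  rw [radical, Nat.primeFactors_pow _ he, hp.primeFactors, prod_singleton]

section PowFree

variable {k : ℕ}

lemma powFree_mul_iff (hk : k ≠ 0) {m n : ℕ} (h : m.Coprime n) :
    (∀ p : ℕ, p.Prime → ¬ p ^ k ∣ m * n) ↔
      (∀ p : ℕ, p.Prime → ¬ p ^ k ∣ m) ∧ ∀ p : ℕ, p.Prime → ¬ p ^ k ∣ n := by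
  simp only [← forall_and]
  refine forall₂_congr fun p hp ↦ ?_
  rw [h.isPrimePow_dvd_mul (hp.prime.isPrimePow.pow hk)]
  tauto

lemma powFree_prime_pow_iff {p e : ℕ} (hp : p.Prime) :
    (∀ q : ℕ, q.Prime → ¬ q ^ k ∣ p ^ e) ↔ e < k := by
  refine ⟨fun h ↦ not_le.mp fun hke ↦ h p hp (pow_dvd_pow p hke), fun hek q hq hdvd ↦ ?_⟩
  have hqp : q = p := (Nat.prime_dvd_prime_iff_eq hq hp).mp
    (hq.dvd_of_dvd_pow ((dvd_pow_self q (by omega)).trans hdvd))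
  subst hqp
  exact absurd ((Nat.pow_dvd_pow_iff_le_right hq.one_lt).mp hdvd) (by omega)

end PowFree

noncomputable def kFreeRadicalTerm (k : ℕ) (s : ℝ) (y : ℕ) : ℝ :=
  if 0 < y ∧ ∀ p : ℕ, p.Prime → ¬ p ^ k ∣ y then ((radical y : ℕ) : ℝ) ^ (-s) else 0

namespace kFreeRadicalTerm

variable {k : ℕ} {s : ℝ}

lemma nonneg (y : ℕ) : 0 ≤ kFreeRadicalTerm k s y := by
  unfold kFreeRadicalTerm
  split_ifs
  exacts [Real.rpow_nonneg (Nat.cast_nonneg _) _, le_rfl]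

lemma map_zero : kFreeRadicalTerm k s 0 = 0 := by simp [kFreeRadicalTerm]

lemma map_mul_of_coprime (hk : k ≠ 0) {m n : ℕ} (h : m.Coprime n) :
    kFreeRadicalTerm k s (m * n) = kFreeRadicalTerm k s m * kFreeRadicalTerm k s n := by
  rcases m.eq_zero_or_pos with rfl | hm
  · simp [map_zero]
  rcases n.eq_zero_or_pos with rfl | hn
  · simp [map_zero]
  simp only [kFreeRadicalTerm, Nat.mul_pos hm hn, hm, hn, true_and, powFree_mul_iff hk h]
  split_ifs <;> simp_all [radical_mul_of_coprime hm.ne' hn.ne' h, Real.mul_rpow]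

lemma apply_prime_pow {p e : ℕ} (hp : p.Prime) :
    kFreeRadicalTerm k s (p ^ e) =
      if e < k then (if e = 0 then 1 else (p : ℝ) ^ (-s)) else 0 := by
  rw [kFreeRadicalTerm, powFree_prime_pow_iff hp]
  rcases eq_or_ne e 0 with rfl | he
  · simp [radical]
  · simp [pow_pos hp.pos, radical_prime_pow hp he, he]

lemma map_one (hk : k ≠ 0) : kFreeRadicalTerm k s 1 = 1 := by
  simpa [Nat.pos_of_ne_zero hk] using apply_prime_pow (k := k) (s := s) (e := 0) Nat.prime_two

lemma hasSum_prime_pow (hk : k ≠ 0) {p : ℕ} (hp : p.Prime) :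
    HasSum (fun e ↦ kFreeRadicalTerm k s (p ^ e)) (1 + ((k : ℝ) - 1) / (p : ℝ) ^ s) := by
  have hzero : ∀ e ∉ range k, kFreeRadicalTerm k s (p ^ e) = 0 := fun e he ↦ by
    simp_all [apply_prime_pow hp]
  suffices
      ∑ e ∈ range k, kFreeRadicalTerm k s (p ^ e) = 1 + ((k : ℝ) - 1) / (p : ℝ) ^ s from
    this ▸ hasSum_sum_of_ne_finset_zero hzero
  obtain ⟨k, rfl⟩ := Nat.exists_eq_succ_of_ne_zero hk
  rw [sum_range_succ', pow_zero, map_one hk]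
  rw [sum_congr rfl fun e he ↦ by
    rw [apply_prime_pow hp, if_pos (by simpa using he), if_neg e.succ_ne_zero]]
  rw [sum_const, card_range, nsmul_eq_mul, Real.rpow_neg (Nat.cast_nonneg p), div_eq_mul_inv]
  push_cast
  ring

lemma summable_and_tsum_le (hk : k ≠ 0) (hs : 1 < s) :
    Summable (kFreeRadicalTerm k s) ∧
      ∑' y, kFreeRadicalTerm k s y ≤ (1 + 1 / (s - 1)) ^ (k - 1) := by
  refine summable_and_tsum_le_of_prod_primesBelow_le map_zero (map_one hk)
    (map_mul_of_coprime hk) nonneg (fun hp ↦ (hasSum_prime_pow hk hp).summable) fun N ↦ ?_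
  have hprimes {p : ℕ} (hp : p ∈ N.primesBelow) : p.Prime := Nat.prime_of_mem_primesBelow hp
  calc ∏ p ∈ N.primesBelow, ∑' e, kFreeRadicalTerm k s (p ^ e)
      = ∏ p ∈ N.primesBelow, (1 + ((k - 1 : ℕ) : ℝ) * (p : ℝ) ^ (-s)) :=
        prod_congr rfl fun p hp ↦ by
          rw [(hasSum_prime_pow hk (hprimes hp)).tsum_eq, Nat.cast_pred (Nat.pos_of_ne_zero hk),
            Real.rpow_neg (Nat.cast_nonneg p), div_eq_mul_inv]
    _ ≤ ∏ p ∈ N.primesBelow, (1 + (p : ℝ) ^ (-s)) ^ (k - 1) :=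
        prod_le_prod (fun p _ ↦ by positivity) fun p _ ↦
          one_add_mul_le_pow (by linarith [Real.rpow_nonneg (Nat.cast_nonneg p) (-s)]) _
    _ = (∏ p ∈ N.primesBelow, (1 + (p : ℝ) ^ (-s))) ^ (k - 1) := prod_pow _ _ _
    _ ≤ (∑' n : ℕ, (n : ℝ) ^ (-s)) ^ (k - 1) := by
        gcongr
        exact prod_one_add_rpow_neg_le_tsum hs fun p hp ↦ hprimes hp
    _ ≤ (1 + 1 / (s - 1)) ^ (k - 1) := by
        gcongr
        exact tsum_nat_rpow_neg_le hs

lemma hasProd_eulerProduct (hk : k ≠ 0) (hs : 1 < s) :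
    HasProd (fun p : Nat.Primes ↦ 1 + ((k : ℝ) - 1) / ((p : ℕ) : ℝ) ^ s)
      (∑' y, kFreeRadicalTerm k s y) := by
  have hprod := EulerProduct.eulerProduct_hasProd (map_one hk) (map_mul_of_coprime hk)
    (summable_and_tsum_le hk hs).1.abs map_zero
  simpa only [fun p : Nat.Primes ↦ (hasSum_prime_pow (s := s) hk p.prop).tsum_eq] using hprod

end kFreeRadicalTerm

theorem kfree_radical_sum (k : ℕ) (hk : 2 ≤ k) :
    (∀ c : ℝ, 0 < c → c ≤ 1 →
      HasProd (fun p : Nat.Primes =>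
        1 + ((k : ℝ) - 1) / ((p : ℕ) : ℝ) ^ ((k : ℝ) * c + 1)) (F k c)) ∧
    ∃ C : ℝ, 0 < C ∧ ∀ c : ℝ, 0 < c → c ≤ 1 →
      F k c ≤ C * (c ^ (-((k : ℝ) - 1)) + 1) := by
  have hk0 : k ≠ 0 := by omega
  have hF (c : ℝ) : F k c = ∑' y, kFreeRadicalTerm k (k * c + 1) y := by
    simp only [F, kFreeRadicalTerm, neg_add']
  have hs {c : ℝ} (hc : 0 < c) : 1 < (k : ℝ) * c + 1 := by
    have : (0 : ℝ) < k := by positivity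
    nlinarith
  refine ⟨fun c hc _ ↦ hF c ▸ kFreeRadicalTerm.hasProd_eulerProduct hk0 (hs hc),
    2 ^ (k - 1), by positivity, fun c hc hc1 ↦ ?_⟩
  have hk1 : (1 : ℝ) ≤ k := by exact_mod_cast hk0.bot_lt
  calc F k c ≤ (1 + 1 / (k * c)) ^ (k - 1) := by
        simpa [hF] using (kFreeRadicalTerm.summable_and_tsum_le hk0 (hs hc)).2
    _ ≤ (2 / c) ^ (k - 1) := by
        gcongr
        calc 1 + 1 / (k * c) ≤ 1 / c + 1 / c := by
              gcongr
              · exact one_le_one_div hc hc1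
              · nlinarith
          _ = 2 / c := by ring
    _ = 2 ^ (k - 1) * c ^ (-((k : ℝ) - 1)) := by
        rw [div_pow, Real.rpow_neg hc.le, ← Nat.cast_pred (Nat.pos_of_ne_zero hk0),
          Real.rpow_natCast, div_eq_mul_inv]
    _ ≤ 2 ^ (k - 1) * (c ^ (-((k : ℝ) - 1)) + 1) := by gcongr; linarith
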